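/- Let E : ℝ^D → ℝ be smooth and θ₀ ∈ ℝ^D. Then there exist C > 0 and h₀ > 0 such that for every h ∈ (0, h₀) and every solution φ : [0, h] → ℝ^D of the implicit gradient regularisation (IGR) flow φ′(t) = −∇E(φ(t)) − (h/2) ∇²E(φ(t))[∇E(φ(t))] with φ(0) = θ₀, one has ‖φ(h) − (θ₀ − h ∇E(θ₀))‖ ≤ C h³; that is, one gradient descent step with learning rate h follows the IGR flow with error of order O(h³). -/

import Mathlib

open Set Metric Filter


lemma stay_in_ball {X : Type*} [NormedAddCommGroup X] [NormedSpace ℝ X]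
    (φ v : ℝ → X) (θ₀ : X) (h B : ℝ) (hh : 0 < h) (hB : 0 < B)
    (hBh : B * h ≤ 1/2) (h0 : φ 0 = θ₀)
    (hd : ∀ t ∈ Icc (0:ℝ) h, HasDerivAt φ (v t) t)
    (hv : ∀ t ∈ Icc (0:ℝ) h, ‖φ t - θ₀‖ ≤ 1 → ‖v t‖ ≤ B) :
    ∀ t ∈ Icc (0:ℝ) h, ‖φ t - θ₀‖ ≤ B * t := by
  set S : Set ℝ := {t ∈ Icc (0:ℝ) h | ∀ s ∈ Icc (0:ℝ) t, ‖φ s - θ₀‖ ≤ 1} with hS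
  have h0S : (0:ℝ) ∈ S := by
    refine ⟨⟨le_refl 0, hh.le⟩, fun s hs => ?_⟩
    have : s = 0 := le_antisymm hs.2 hs.1
    simp [this, h0]
  have hbdd : BddAbove S := ⟨h, fun t ht => ht.1.2⟩
  have hne : S.Nonempty := ⟨0, h0S⟩
  set T := sSup S with hT
  have hT0 : 0 ≤ T := le_csSup hbdd h0S
  have hTh : T ≤ h := csSup_le hne fun t ht => ht.1.2
  -- all points of [0,T] satisfy the bound ≤ 1
  have key : ∀ s ∈ Icc (0:ℝ) T, ‖φ s - θ₀‖ ≤ 1 := by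
    intro s hs
    rcases lt_or_eq_of_le hs.2 with hlt | heq
    · obtain ⟨t, htS, hst⟩ := exists_lt_of_lt_csSup hne hlt
      exact htS.2 s ⟨hs.1, hst.le⟩
    · -- s = T : use continuity
      subst heq
      rcases eq_or_lt_of_le hT0 with h0T | h0T
      · simp [← h0T, h0]
      · have hcont : ContinuousAt φ T :=
          (hd T ⟨hT0, hTh⟩).continuousAt
        have htd : Tendsto (fun u => ‖φ u - θ₀‖) (nhdsWithin T (Iio T)) (nhds ‖φ T - θ₀‖) :=
          ((hcont.tendsto.sub tendsto_const_nhds).norm).comp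
            (nhdsWithin_le_nhds)
        refine le_of_tendsto htd ?_
        filter_upwards [Ioo_mem_nhdsLT_of_mem ⟨h0T, le_refl T⟩] with u hu
        obtain ⟨t, htS, hut⟩ := exists_lt_of_lt_csSup hne hu.2
        exact htS.2 u ⟨hu.1.le, hut.le⟩
  -- mean value estimate on [0,T]
  have mvt : ∀ s ∈ Icc (0:ℝ) T, ‖φ s - θ₀‖ ≤ B * s := by
    intro s hs
    have hsub : Icc (0:ℝ) T ⊆ Icc (0:ℝ) h := Icc_subset_Icc le_rfl hTh
    have := Convex.norm_image_sub_le_of_norm_hasDerivWithin_le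
      (f := φ) (f' := v) (s := Icc (0:ℝ) T) (C := B)
      (fun u hu => (hd u (hsub hu)).hasDerivWithinAt)
      (fun u hu => hv u (hsub hu) (key u hu))
      (convex_Icc 0 T) ⟨le_refl 0, hT0⟩ hs
    simpa [h0, abs_of_nonneg hs.1] using this
  -- show T = h
  have hTeq : T = h := by
    by_contra hne'
    have hTlt : T < h := lt_of_le_of_ne hTh hne'
    have hφT : ‖φ T - θ₀‖ ≤ 1/2 := by
      calc ‖φ T - θ₀‖ ≤ B * T := mvt T ⟨hT0, le_rfl⟩
        _ ≤ B * h := by nlinarith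
        _ ≤ 1/2 := hBh
    have hcont : ContinuousAt φ T := (hd T ⟨hT0, hTh⟩).continuousAt
    obtain ⟨δ, hδ0, hδ⟩ := Metric.continuousAt_iff.mp hcont (1/4) (by norm_num)
    set t' := min h (T + δ/2) with ht'
    have ht'T : T < t' := lt_min hTlt (by linarith)
    have ht'S : t' ∈ S := by
      refine ⟨⟨le_trans hT0 ht'T.le, min_le_left _ _⟩, fun s hs => ?_⟩
      rcases le_or_gt s T with hsT | hsT
      · exact key s ⟨hs.1, hsT⟩
      · have hds : dist s T < δ := by
          have : s ≤ T + δ/2 := le_trans hs.2 (min_le_right _ _)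
          rw [Real.dist_eq, abs_of_pos (by linarith)]
          linarith
        have := hδ hds
        rw [dist_eq_norm] at this
        calc ‖φ s - θ₀‖ ≤ ‖φ s - φ T‖ + ‖φ T - θ₀‖ := norm_sub_le_norm_sub_add_norm_sub _ _ _
          _ ≤ 1/4 + 1/2 := add_le_add this.le hφT
          _ ≤ 1 := by norm_num
    exact absurd (le_csSup hbdd ht'S) (not_le.mpr ht'T)
  intro t ht
  exact mvt t ⟨ht.1, hTeq ▸ ht.2⟩

noncomputable def toDualSymmCLM (X : Type*) [NormedAddCommGroup X]
    [InnerProductSpace ℝ X] [CompleteSpace X] :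
    StrongDual ℝ X →L[ℝ] X where
  toFun := fun p => (InnerProductSpace.toDual ℝ X).symm p
  map_add' := fun a b => map_add _ a b
  map_smul' := fun c a => by
    simpa using (InnerProductSpace.toDual ℝ X).symm.map_smulₛₗ c a
  cont := (InnerProductSpace.toDual ℝ X).symm.continuous

lemma gradient_contDiff {X : Type*} [NormedAddCommGroup X]
    [InnerProductSpace ℝ X] [CompleteSpace X] (E : X → ℝ)
    (hE : ContDiff ℝ (⊤ : ℕ∞) E) : ContDiff ℝ (⊤ : ℕ∞) (gradient E) := by
  have h1 : ContDiff ℝ (⊤ : ℕ∞) (fderiv ℝ E) := (contDiff_infty_iff_fderiv.mp hE).2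
  have h2 : gradient E = fun x => toDualSymmCLM X (fderiv ℝ E x) := rfl
  rw [h2]
  exact (toDualSymmCLM X).contDiff.comp h1

set_option maxHeartbeats 1000000 in
/-- One gradient descent step with learning rate `h` follows the IGR flow
`φ' = −∇E(φ) − (h/2) ∇²E(φ)[∇E(φ)]` with error of order `O(h³)`. -/
theorem gd_follows_igr_flow {D : ℕ}
    (E : EuclideanSpace ℝ (Fin D) → ℝ) (hE : ContDiff ℝ (⊤ : ℕ∞) E)
    (θ₀ : EuclideanSpace ℝ (Fin D)) :
    ∃ C > (0 : ℝ), ∃ h₀ > (0 : ℝ), ∀ h ∈ Set.Ioo (0 : ℝ) h₀,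
      ∀ φ : ℝ → EuclideanSpace ℝ (Fin D),
        φ 0 = θ₀ →
        (∀ t ∈ Set.Icc (0 : ℝ) h,
          HasDerivAt φ
            (-(gradient E (φ t))
              - (h / 2) • fderiv ℝ (gradient E) (φ t) (gradient E (φ t))) t) →
        ‖φ h - (θ₀ - h • gradient E θ₀)‖ ≤ C * h ^ 3 := by
  have hg : ContDiff ℝ (⊤ : ℕ∞) (gradient E) := gradient_contDiff E (hE.of_le (by simp))
  set g := gradient E with hgdef
  set Dg := fderiv ℝ g with hDgdef
  have hgdiff : Differentiable ℝ g := hg.differentiable (by simp)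
  have hDg : ContDiff ℝ (⊤ : ℕ∞) Dg := (contDiff_infty_iff_fderiv.mp hg).2
  have hDgdiff : Differentiable ℝ Dg := hDg.differentiable (by simp)
  have hD2g : Continuous (fderiv ℝ Dg) := (contDiff_infty_iff_fderiv.mp hDg).2.continuous
  -- bounds on the closed unit ball
  obtain ⟨M₀, hM₀⟩ := (isCompact_closedBall θ₀ 1).exists_bound_of_continuousOn
    hg.continuous.continuousOn
  obtain ⟨L₀, hL₀⟩ := (isCompact_closedBall θ₀ 1).exists_bound_of_continuousOn
    hDg.continuous.continuousOn
  obtain ⟨K₀, hK₀⟩ := (isCompact_closedBall θ₀ 1).exists_bound_of_continuousOn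
    (contDiff_infty_iff_fderiv.mp hDg).2.continuous.continuousOn
  set M := max M₀ 1 with hMdef
  set L := max L₀ 1 with hLdef
  set K := max K₀ 0 with hKdef
  have hM1 : (1:ℝ) ≤ M := le_max_right _ _
  have hL1 : (1:ℝ) ≤ L := le_max_right _ _
  have hK0 : (0:ℝ) ≤ K := le_max_right _ _
  have hM : ∀ x ∈ closedBall θ₀ 1, ‖g x‖ ≤ M := fun x hx => (hM₀ x hx).trans (le_max_left _ _)
  have hL : ∀ x ∈ closedBall θ₀ 1, ‖Dg x‖ ≤ L := fun x hx => (hL₀ x hx).trans (le_max_left _ _)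
  have hK : ∀ x ∈ closedBall θ₀ 1, ‖fderiv ℝ Dg x‖ ≤ K :=
    fun x hx => (hK₀ x hx).trans (le_max_left _ _)
  have hball : θ₀ ∈ closedBall θ₀ 1 := mem_closedBall_self zero_le_one
  clear_value M L K
  -- Lipschitz estimates on the ball
  have lipg : ∀ x ∈ closedBall θ₀ 1, ‖g x - g θ₀‖ ≤ L * ‖x - θ₀‖ :=
    fun x hx => (convex_closedBall θ₀ 1).norm_image_sub_le_of_norm_fderiv_le
      (fun z _ => hgdiff z) (fun z hz => hL z hz) hball hx
  have lipDg : ∀ x ∈ closedBall θ₀ 1, ‖Dg x - Dg θ₀‖ ≤ K * ‖x - θ₀‖ :=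
    fun x hx => (convex_closedBall θ₀ 1).norm_image_sub_le_of_norm_fderiv_le
      (fun z _ => hDgdiff z) (fun z hz => hK z hz) hball hx
  -- second-order Taylor bound for g
  have hR1 : ∀ y ∈ closedBall θ₀ 1, ‖g y - g θ₀ - Dg θ₀ (y - θ₀)‖ ≤ K * ‖y - θ₀‖ ^ 2 := by
    intro y hy
    set r := ‖y - θ₀‖ with hr
    have hr0 : 0 ≤ r := norm_nonneg _
    have hr1 : r ≤ 1 := by rwa [mem_closedBall_iff_norm] at hy
    have hsub : closedBall θ₀ r ⊆ closedBall θ₀ 1 := closedBall_subset_closedBall hr1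
    have hdf : ∀ z, DifferentiableAt ℝ (fun x => g x - Dg θ₀ x) z :=
      fun z => (hgdiff z).sub ((Dg θ₀).differentiableAt)
    have hfd : ∀ z, fderiv ℝ (fun x => g x - Dg θ₀ x) z = Dg z - Dg θ₀ := by
      intro z
      have := ((hgdiff z).hasFDerivAt.sub ((Dg θ₀).hasFDerivAt))
      exact this.fderiv
    have key := (convex_closedBall θ₀ r).norm_image_sub_le_of_norm_fderiv_le
      (f := fun x => g x - Dg θ₀ x) (C := K * r)
      (fun z _ => hdf z)
      (fun z hz => by
        rw [hfd z]
        calc ‖Dg z - Dg θ₀‖ ≤ K * ‖z - θ₀‖ := lipDg z (hsub hz)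
          _ ≤ K * r := by
            have : ‖z - θ₀‖ ≤ r := by rwa [mem_closedBall_iff_norm] at hz
            nlinarith)
      (mem_closedBall_self hr0)
      (by rw [mem_closedBall_iff_norm])
    have : g y - Dg θ₀ y - (g θ₀ - Dg θ₀ θ₀) = g y - g θ₀ - Dg θ₀ (y - θ₀) := by
      rw [map_sub]; abel
    rw [this] at key
    calc ‖g y - g θ₀ - Dg θ₀ (y - θ₀)‖ ≤ K * r * ‖y - θ₀‖ := key
      _ = K * r ^ 2 := by rw [← hr]; ring
  -- constants
  have hL0 : (0:ℝ) < L := lt_of_lt_of_le one_pos hL1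
  have hM0 : (0:ℝ) < M := lt_of_lt_of_le one_pos hM1
  set B := 2 * L * M with hBdef
  set C₂ := L * B + L * M with hC₂def
  set C₃ := K * M + L * L with hC₃def
  set C := K * B ^ 2 + L * C₂ + C₃ * B with hCdef
  clear_value B C₂ C₃ C
  have hBpos : 0 < B := by rw [hBdef]; exact mul_pos (mul_pos two_pos hL0) hM0
  have hC₂0 : (0:ℝ) < C₂ := by
    rw [hC₂def]; exact add_pos (mul_pos hL0 hBpos) (mul_pos hL0 hM0)
  have hC₃0 : (0:ℝ) ≤ C₃ := by
    rw [hC₃def]; exact add_nonneg (mul_nonneg hK0 hM0.le) (mul_pos hL0 hL0).le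
  have hCpos : 0 < C := by
    rw [hCdef]
    have p1 : (0:ℝ) ≤ K * B ^ 2 := mul_nonneg hK0 (sq_nonneg B)
    have p2 : (0:ℝ) < L * C₂ := mul_pos hL0 hC₂0
    have p3 : (0:ℝ) ≤ C₃ * B := mul_nonneg hC₃0 hBpos.le
    linarith
  refine ⟨C, hCpos, min 1 (1 / (2 * B)), lt_min one_pos (by positivity), ?_⟩
  intro h hh φ hφ0 hφd
  have hh0 : 0 < h := hh.1
  have hh1 : h ≤ 1 := le_trans hh.2.le (min_le_left _ _)
  have hBh : B * h ≤ 1 / 2 := by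
    have := lt_of_lt_of_le hh.2 (min_le_right _ _)
    rw [lt_div_iff₀ (by positivity)] at this
    nlinarith
  set v : ℝ → EuclideanSpace ℝ (Fin D) :=
    fun t => -(g (φ t)) - (h / 2) • Dg (φ t) (g (φ t)) with hvdef
  have hballmem : ∀ x : EuclideanSpace ℝ (Fin D), ‖x - θ₀‖ ≤ 1 → x ∈ closedBall θ₀ 1 :=
    fun x hx => by rwa [mem_closedBall_iff_norm]
  -- a priori bound
  have hstay : ∀ t ∈ Icc (0:ℝ) h, ‖φ t - θ₀‖ ≤ B * t := by
    refine stay_in_ball φ v θ₀ h B hh0 hBpos hBh hφ0 (fun t ht => hφd t ht) ?_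
    intro t ht hφt
    have hmem := hballmem _ hφt
    have h1 : ‖g (φ t)‖ ≤ M := hM _ hmem
    have h2 : ‖Dg (φ t) (g (φ t))‖ ≤ L * M := by
      calc ‖Dg (φ t) (g (φ t))‖ ≤ ‖Dg (φ t)‖ * ‖g (φ t)‖ := (Dg (φ t)).le_opNorm _
        _ ≤ L * M := by nlinarith [norm_nonneg (Dg (φ t)), norm_nonneg (g (φ t)), hL _ hmem]
    calc ‖v t‖ ≤ ‖g (φ t)‖ + ‖(h / 2) • Dg (φ t) (g (φ t))‖ := by
          rw [hvdef]; exact (norm_sub_le _ _).trans (by rw [norm_neg])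
      _ = ‖g (φ t)‖ + (h / 2) * ‖Dg (φ t) (g (φ t))‖ := by
          rw [norm_smul, Real.norm_eq_abs, abs_of_nonneg (by linarith)]
      _ ≤ B := by
          rw [hBdef]
          have e1 : h * ‖Dg (φ t) (g (φ t))‖ ≤ 1 * (L * M) :=
            mul_le_mul hh1 h2 (norm_nonneg _) zero_le_one
          have e2 : 1 * M ≤ L * M := mul_le_mul_of_nonneg_right hL1 hM0.le
          linarith
  have hin : ∀ t ∈ Icc (0:ℝ) h, φ t ∈ closedBall θ₀ 1 := by
    intro t ht
    refine hballmem _ ?_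
    calc ‖φ t - θ₀‖ ≤ B * t := hstay t ht
      _ ≤ B * h := by nlinarith [hBpos.le, ht.2]
      _ ≤ 1 := by linarith
  have hδ : ∀ t ∈ Icc (0:ℝ) h, ‖φ t - θ₀‖ ≤ B * h := by
    intro t ht
    calc ‖φ t - θ₀‖ ≤ B * t := hstay t ht
      _ ≤ B * h := by nlinarith [hBpos.le, ht.2]
  -- bound on v t + g θ₀
  have hvb : ∀ t ∈ Icc (0:ℝ) h, ‖v t + g θ₀‖ ≤ C₂ * h := by
    intro t ht
    have h1 : ‖g (φ t) - g θ₀‖ ≤ L * (B * h) := by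
      calc ‖g (φ t) - g θ₀‖ ≤ L * ‖φ t - θ₀‖ := lipg _ (hin t ht)
        _ ≤ L * (B * h) := by nlinarith [hδ t ht]
    have h2 : ‖Dg (φ t) (g (φ t))‖ ≤ L * M := by
      calc ‖Dg (φ t) (g (φ t))‖ ≤ ‖Dg (φ t)‖ * ‖g (φ t)‖ := (Dg (φ t)).le_opNorm _
        _ ≤ L * M := by
            nlinarith [norm_nonneg (Dg (φ t)), norm_nonneg (g (φ t)), hL _ (hin t ht),
              hM _ (hin t ht)]
    have heq : v t + g θ₀ = (g θ₀ - g (φ t)) - (h / 2) • Dg (φ t) (g (φ t)) := by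
      rw [hvdef]; module
    calc ‖v t + g θ₀‖ ≤ ‖g θ₀ - g (φ t)‖ + ‖(h / 2) • Dg (φ t) (g (φ t))‖ := by
          rw [heq]; exact norm_sub_le _ _
      _ = ‖g (φ t) - g θ₀‖ + (h / 2) * ‖Dg (φ t) (g (φ t))‖ := by
          rw [norm_sub_rev, norm_smul, Real.norm_eq_abs, abs_of_nonneg (by linarith)]
      _ ≤ L * (B * h) + (h / 2) * (L * M) := by nlinarith [h1, h2, hh0.le]
      _ ≤ C₂ * h := by
          rw [hC₂def]
          nlinarith [mul_nonneg (mul_nonneg hL0.le hM0.le) hh0.le]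
  -- R₂ bound
  have hR2 : ∀ t ∈ Icc (0:ℝ) h, ‖φ t - θ₀ + t • g θ₀‖ ≤ C₂ * h * h := by
    intro t ht
    have hd2 : ∀ s ∈ Icc (0:ℝ) h,
        HasDerivWithinAt (fun u => φ u - θ₀ + u • g θ₀) (v s + g θ₀) (Icc (0:ℝ) h) s := by
      intro s hs
      have := ((hφd s hs).sub_const θ₀).add ((hasDerivAt_id s).smul_const (g θ₀))
      have h2 : v s + (1:ℝ) • g θ₀ = v s + g θ₀ := by rw [one_smul]
      rw [← h2]
      exact this.hasDerivWithinAt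
    have key := Convex.norm_image_sub_le_of_norm_hasDerivWithin_le
      (f := fun u => φ u - θ₀ + u • g θ₀) (f' := fun s => v s + g θ₀)
      (C := C₂ * h) hd2 hvb (convex_Icc 0 h) (left_mem_Icc.mpr hh0.le) ht
    have key' : ‖φ t - θ₀ + t • g θ₀‖ ≤ C₂ * h * t := by
      simpa [hφ0, abs_of_nonneg ht.1] using key
    calc ‖φ t - θ₀ + t • g θ₀‖ ≤ C₂ * h * t := key'
      _ ≤ C₂ * h * h := by nlinarith [mul_nonneg hC₂0.le hh0.le, ht.2]
  -- R₃ bound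
  have hR3 : ∀ t ∈ Icc (0:ℝ) h,
      ‖Dg (φ t) (g (φ t)) - Dg θ₀ (g θ₀)‖ ≤ C₃ * (B * h) := by
    intro t ht
    have heq : Dg (φ t) (g (φ t)) - Dg θ₀ (g θ₀)
        = (Dg (φ t) - Dg θ₀) (g (φ t)) + Dg θ₀ (g (φ t) - g θ₀) := by
      simp [ContinuousLinearMap.sub_apply, map_sub]
    have h1 : ‖(Dg (φ t) - Dg θ₀) (g (φ t))‖ ≤ K * (B * h) * M := by
      calc ‖(Dg (φ t) - Dg θ₀) (g (φ t))‖ ≤ ‖Dg (φ t) - Dg θ₀‖ * ‖g (φ t)‖ :=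
            (Dg (φ t) - Dg θ₀).le_opNorm _
        _ ≤ K * (B * h) * M := by
            have hA : ‖Dg (φ t) - Dg θ₀‖ ≤ K * (B * h) :=
              (lipDg _ (hin t ht)).trans (by nlinarith [hδ t ht, hK0])
            exact mul_le_mul hA (hM _ (hin t ht)) (norm_nonneg _)
              (mul_nonneg hK0 (mul_nonneg hBpos.le hh0.le))
    have h2 : ‖Dg θ₀ (g (φ t) - g θ₀)‖ ≤ L * (L * (B * h)) := by
      calc ‖Dg θ₀ (g (φ t) - g θ₀)‖ ≤ ‖Dg θ₀‖ * ‖g (φ t) - g θ₀‖ := (Dg θ₀).le_opNorm _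
        _ ≤ L * (L * (B * h)) := by
            have hx : ‖g (φ t) - g θ₀‖ ≤ L * (B * h) :=
              (lipg _ (hin t ht)).trans (by nlinarith [hδ t ht, hL0])
            exact mul_le_mul (hL _ hball) hx (norm_nonneg _) hL0.le
    calc ‖Dg (φ t) (g (φ t)) - Dg θ₀ (g θ₀)‖
        ≤ ‖(Dg (φ t) - Dg θ₀) (g (φ t))‖ + ‖Dg θ₀ (g (φ t) - g θ₀)‖ := by
          rw [heq]; exact norm_add_le _ _
      _ ≤ K * (B * h) * M + L * (L * (B * h)) := add_le_add h1 h2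
      _ = C₃ * (B * h) := by rw [hC₃def]; ring
  -- the corrected curve ψ
  set w := Dg θ₀ (g θ₀) with hwdef
  set ψ : ℝ → EuclideanSpace ℝ (Fin D) :=
    fun t => φ t - θ₀ + t • g θ₀ - (t ^ 2 / 2 - h * t / 2) • w with hψdef
  have hψd : ∀ t ∈ Icc (0:ℝ) h,
      HasDerivWithinAt ψ (v t + g θ₀ - (t - h / 2) • w) (Icc (0:ℝ) h) t := by
    intro t ht
    have hsc : HasDerivAt (fun u : ℝ => u ^ 2 / 2 - h * u / 2) (t - h / 2) t := by
      have := ((hasDerivAt_pow 2 t).div_const 2).sub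
        (((hasDerivAt_id t).const_mul h).div_const 2)
      exact this.congr_deriv (by norm_num)
    have := (((hφd t ht).sub_const θ₀).add ((hasDerivAt_id t).smul_const (g θ₀))).sub
      (hsc.smul_const w)
    have h2 : v t + (1:ℝ) • g θ₀ - (t - h / 2) • w = v t + g θ₀ - (t - h / 2) • w := by
      rw [one_smul]
    rw [← h2]
    exact this.hasDerivWithinAt
  -- bound on the derivative of ψ
  have hψb : ∀ t ∈ Icc (0:ℝ) h, ‖v t + g θ₀ - (t - h / 2) • w‖ ≤ C * h ^ 2 := by
    intro t ht
    have heq : v t + g θ₀ - (t - h / 2) • w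
        = -(g (φ t) - g θ₀ - Dg θ₀ (φ t - θ₀))
          - Dg θ₀ (φ t - θ₀ + t • g θ₀)
          - (h / 2) • (Dg (φ t) (g (φ t)) - w) := by
      rw [hvdef, hwdef]
      have e1 : Dg θ₀ (φ t - θ₀ + t • g θ₀) = Dg θ₀ (φ t - θ₀) + t • Dg θ₀ (g θ₀) := by
        rw [map_add, map_smul]
      rw [e1]
      module
    have b1' : ‖g (φ t) - g θ₀ - Dg θ₀ (φ t - θ₀)‖ ≤ K * ‖φ t - θ₀‖ ^ 2 := hR1 _ (hin t ht)
    have sq1 : ‖φ t - θ₀‖ ^ 2 ≤ (B * h) ^ 2 :=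
      pow_le_pow_left₀ (norm_nonneg _) (hδ t ht) 2
    have b1 : ‖g (φ t) - g θ₀ - Dg θ₀ (φ t - θ₀)‖ ≤ K * (B * h) ^ 2 :=
      b1'.trans (mul_le_mul_of_nonneg_left sq1 hK0)
    have b2 : ‖Dg θ₀ (φ t - θ₀ + t • g θ₀)‖ ≤ L * (C₂ * h * h) := by
      calc ‖Dg θ₀ (φ t - θ₀ + t • g θ₀)‖ ≤ ‖Dg θ₀‖ * ‖φ t - θ₀ + t • g θ₀‖ :=
            (Dg θ₀).le_opNorm _
        _ ≤ L * (C₂ * h * h) := by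
            exact mul_le_mul (hL _ hball) (hR2 t ht) (norm_nonneg _) hL0.le
    have b3 : ‖(h / 2) • (Dg (φ t) (g (φ t)) - w)‖ ≤ (h / 2) * (C₃ * (B * h)) := by
      rw [norm_smul, Real.norm_eq_abs, abs_of_nonneg (by linarith : (0:ℝ) ≤ h / 2)]
      exact mul_le_mul_of_nonneg_left (hR3 t ht) (by linarith : (0:ℝ) ≤ h / 2)
    calc ‖v t + g θ₀ - (t - h / 2) • w‖
        ≤ ‖g (φ t) - g θ₀ - Dg θ₀ (φ t - θ₀)‖ + ‖Dg θ₀ (φ t - θ₀ + t • g θ₀)‖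
          + ‖(h / 2) • (Dg (φ t) (g (φ t)) - w)‖ := by
          rw [heq]
          refine (norm_sub_le _ _).trans ?_
          gcongr
          refine (norm_sub_le _ _).trans ?_
          rw [norm_neg]
      _ ≤ K * (B * h) ^ 2 + L * (C₂ * h * h) + (h / 2) * (C₃ * (B * h)) :=
          add_le_add (add_le_add b1 b2) b3
      _ = (K * B ^ 2 + L * C₂ + C₃ * B / 2) * h ^ 2 := by ring
      _ ≤ C * h ^ 2 := by
          have hcoef : K * B ^ 2 + L * C₂ + C₃ * B / 2 ≤ C := by
            rw [hCdef]
            have hnn : (0:ℝ) ≤ C₃ * B := mul_nonneg hC₃0 hBpos.le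
            linarith
          exact mul_le_mul_of_nonneg_right hcoef (sq_nonneg h)
  -- conclusion via mean value inequality on ψ
  have key := Convex.norm_image_sub_le_of_norm_hasDerivWithin_le
    (f := ψ) (f' := fun t => v t + g θ₀ - (t - h / 2) • w)
    (C := C * h ^ 2) hψd hψb (convex_Icc 0 h)
    (left_mem_Icc.mpr hh0.le) (right_mem_Icc.mpr hh0.le)
  have hψ0 : ψ 0 = 0 := by simp [hψdef, hφ0]
  have hψh : ψ h = φ h - (θ₀ - h • g θ₀) := by
    rw [hψdef]
    have : (h ^ 2 / 2 - h * h / 2 : ℝ) = 0 := by ring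
    simp only [this, zero_smul, sub_zero]
    abel
  rw [hψ0, hψh, sub_zero, sub_zero, Real.norm_eq_abs, abs_of_nonneg hh0.le] at key
  calc ‖φ h - (θ₀ - h • g θ₀)‖ ≤ C * h ^ 2 * h := key
    _ = C * h ^ 3 := by ring
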